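/- arXiv:2602.06826 — 4 statements merged into one kernel-verified Lean document; each statement's English description precedes it below -/
import Mathlib

section
/- Let P be a nonconstant polynomial with complex coefficients. Then every root of the derivative P' lies in the convex hull of the set of roots of P. -/
open Polynomial

/-- **Gauss–Lucas theorem.** Every root of the derivative of a nonconstant complex
polynomial lies in the convex hull of the set of roots of the polynomial. -/
theorem gauss_lucas (P : Polynomial ℂ) (hP : 0 < P.degree)
    (z : ℂ) (hz : P.derivative.IsRoot z) :
    z ∈ convexHull ℝ {w : ℂ | P.IsRoot w} := by
  have hP₀ : P ≠ 0 := ne_zero_of_degree_gt hP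
  have hP' : P.derivative ≠ 0 :=
    derivative_ne_zero.2 (natDegree_pos_iff_degree_pos.2 hP).ne'
  have hroots (Q : ℂ[X]) (hQ : Q ≠ 0) : Q.rootSet ℂ = {w : ℂ | Q.IsRoot w} := by
    ext w
    simp [mem_rootSet, hQ]
  have hsub := rootSet_derivative_subset_convexHull_rootSet hP
  rw [hroots P hP₀, hroots _ hP'] at hsub
  exact hsub hz
end

section
/- Let N ≥ 2 and let x₁ < x₂ < … < x_N and y₁ < y₂ < … < y_N be two families of N real numbers with x_i ≤ y_i for all 1 ≤ i ≤ N. Let P(X) = ∏_{i=1}^N (X − x_i) and Q(X) = ∏_{i=1}^N (X − y_i), and let x₁' < x₂' < … < x_{N−1}' and y₁' < y₂' < … < y_{N−1}' be the N−1 real roots of P' and Q' respectively, which satisfy x_i < x_i' < x_{i+1} and y_i < y_i' < y_{i+1} for all 1 ≤ i ≤ N−1. Then x_i' ≤ y_i' for all 1 ≤ i ≤ N−1. -/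
/-! At a critical point `t` of `∏ⱼ (X - aⱼ)` that is not a root, the logarithmic derivative
vanishes: `∑ⱼ (t - aⱼ)⁻¹ = 0`. Suppose `y'ᵢ < x'ᵢ`. Both points lie in the `i`-th gap of their
root families, so for every `j` the numbers `x'ᵢ - xⱼ` and `y'ᵢ - yⱼ` have the same sign, and
`x'ᵢ - xⱼ > y'ᵢ - yⱼ` because `xⱼ ≤ yⱼ`. Inversion reverses this on each sign branch, giving
`0 = ∑ⱼ (x'ᵢ - xⱼ)⁻¹ < ∑ⱼ (y'ᵢ - yⱼ)⁻¹ = 0`. -/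

open Finset

theorem inv_lt_inv_of_mul_pos {K : Type*} [Field K] [LinearOrder K] [IsStrictOrderedRing K]
    {p q : K} (hpq : 0 < p * q) (h : q < p) : p⁻¹ < q⁻¹ := by
  rcases pos_and_pos_or_neg_and_neg_of_mul_pos hpq with ⟨hp, hq⟩ | ⟨hp, hq⟩
  · exact inv_strictAnti₀ hq h
  · exact (inv_lt_inv_of_neg hp hq).2 h

theorem sum_inv_sub_eq_zero_of_deriv_prod_sub_eq_zero {𝕜 ι : Type*} [NontriviallyNormedField 𝕜]
    [Fintype ι] {a : ι → 𝕜} {t : 𝕜} (ht : ∀ j, t ≠ a j)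
    (hcrit : deriv (fun s ↦ ∏ j, (s - a j)) t = 0) : ∑ j, (t - a j)⁻¹ = 0 := by
  have hlog := logDeriv_prod (s := univ) (f := fun j s ↦ s - a j) (x := t)
    (fun j _ ↦ sub_ne_zero.2 (ht j)) (fun j _ ↦ differentiableAt_id.sub_const _)
  simpa [logDeriv_apply, hcrit, eq_comm] using hlog

theorem sum_inv_sub_lt_sum_inv_sub {K ι : Type*} [Field K] [LinearOrder K] [IsStrictOrderedRing K]
    [Fintype ι] [Nonempty ι] {a b : ι → K} {s t : K} (hab : ∀ j, a j ≤ b j) (hts : t < s)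
    (hsign : ∀ j, 0 < (s - a j) * (t - b j)) : ∑ j, (s - a j)⁻¹ < ∑ j, (t - b j)⁻¹ :=
  sum_lt_sum_of_nonempty univ_nonempty fun j _ ↦
    inv_lt_inv_of_mul_pos (hsign j) (by linarith [hab j])

theorem sub_mul_sub_pos_of_mem_Ioo {R : Type*} [Ring R] [LinearOrder R] [IsStrictOrderedRing R]
    {n : ℕ} {a b : Fin (n + 1) → R} (ha : Monotone a) (hb : Monotone b) {i : Fin n} {s t : R}
    (hs : s ∈ Set.Ioo (a i.castSucc) (a i.succ)) (ht : t ∈ Set.Ioo (b i.castSucc) (b i.succ))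
    (j : Fin (n + 1)) : 0 < (s - a j) * (t - b j) := by
  rcases le_or_gt j i.castSucc with hj | hj
  · exact mul_pos (sub_pos.2 ((ha hj).trans_lt hs.1)) (sub_pos.2 ((hb hj).trans_lt ht.1))
  · have hj : i.succ ≤ j := Fin.castSucc_lt_iff_succ_le.1 hj
    exact mul_pos_of_neg_of_neg (sub_neg.2 (hs.2.trans_le (ha hj)))
      (sub_neg.2 (ht.2.trans_le (hb hj)))

theorem discrete_comparison_principle_general (n : ℕ)
    (x y : Fin (n + 1) → ℝ)
    (hx : StrictMono x) (hy : StrictMono y)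
    (hxy : ∀ i, x i ≤ y i)
    (P Q : ℝ → ℝ)
    (hP : ∀ t : ℝ, P t = ∏ i, (t - x i))
    (hQ : ∀ t : ℝ, Q t = ∏ i, (t - y i))
    (x' y' : Fin n → ℝ)
    (hx' : ∀ i : Fin n,
      x i.castSucc < x' i ∧ x' i < x i.succ ∧ deriv P (x' i) = 0)
    (hy' : ∀ i : Fin n,
      y i.castSucc < y' i ∧ y' i < y i.succ ∧ deriv Q (y' i) = 0) :
    ∀ i : Fin n, x' i ≤ y' i := by
  intro i
  by_contra! hlt
  obtain ⟨hx₁, hx₂, hPcrit⟩ := hx' i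
  obtain ⟨hy₁, hy₂, hQcrit⟩ := hy' i
  have hsign := sub_mul_sub_pos_of_mem_Ioo hx.monotone hy.monotone ⟨hx₁, hx₂⟩ ⟨hy₁, hy₂⟩
  have hPsum : ∑ j, (x' i - x j)⁻¹ = 0 :=
    sum_inv_sub_eq_zero_of_deriv_prod_sub_eq_zero
      (fun j ↦ sub_ne_zero.1 (left_ne_zero_of_mul (hsign j).ne')) (funext hP ▸ hPcrit)
  have hQsum : ∑ j, (y' i - y j)⁻¹ = 0 :=
    sum_inv_sub_eq_zero_of_deriv_prod_sub_eq_zero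
      (fun j ↦ sub_ne_zero.1 (right_ne_zero_of_mul (hsign j).ne')) (funext hQ ▸ hQcrit)
  have := sum_inv_sub_lt_sum_inv_sub hxy hlt hsign
  rw [hPsum, hQsum] at this
  exact lt_irrefl 0 this

/-- Discrete comparison principle for roots of real polynomials under
differentiation: if `x₁ < ⋯ < x_N` and `y₁ < ⋯ < y_N` with `xᵢ ≤ yᵢ`, and
`xᵢ'` (resp. `yᵢ'`) are the roots of `P'` (resp. `Q'`) interlacing the roots of
`P = ∏ (X - xᵢ)` (resp. `Q = ∏ (X - yᵢ)`), then `xᵢ' ≤ yᵢ'` for all `i`.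
Here `N = n + 1 ≥ 2`. -/
theorem discrete_comparison_principle (n : ℕ) (hn : 1 ≤ n)
    (x y : Fin (n + 1) → ℝ)
    (hx : StrictMono x) (hy : StrictMono y)
    (hxy : ∀ i, x i ≤ y i)
    (P Q : ℝ → ℝ)
    (hP : ∀ t : ℝ, P t = ∏ i, (t - x i))
    (hQ : ∀ t : ℝ, Q t = ∏ i, (t - y i))
    (x' y' : Fin n → ℝ)
    (hx' : ∀ i : Fin n,
      x i.castSucc < x' i ∧ x' i < x i.succ ∧ deriv P (x' i) = 0)
    (hy' : ∀ i : Fin n,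
      y i.castSucc < y' i ∧ y' i < y i.succ ∧ deriv Q (y' i) = 0) :
    ∀ i : Fin n, x' i ≤ y' i :=
  discrete_comparison_principle_general n x y hx hy hxy P Q hP hQ x' y' hx' hy'
end

section
/- Let N ≥ 1, a ∈ ℝ, and let a ≤ x₀ < x₁ < … < x_{2N−1} < a + 2π and a ≤ y₀ < y₁ < … < y_{2N−1} < a + 2π be two families of 2N real numbers. Extend them periodically by x_k = x_{k mod 2N} + 2π⌊k/(2N)⌋ and y_k = y_{k mod 2N} + 2π⌊k/(2N)⌋ for all k ∈ ℤ. Let P(x) = ∏_{i=0}^{2N−1} sin((x − x_i)/2) and Q(x) = ∏_{i=0}^{2N−1} sin((x − y_i)/2), and for each i ∈ ℤ let x_i' be the unique root of P' in (x_i, x_{i+1}) and y_i' the unique root of Q' in (y_i, y_{i+1}). If x_i ≤ y_i for all i ∈ ℤ, then x_i' ≤ y_i' for all i ∈ ℤ. -/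
/-!
At a critical point `t` of `P` in a gap `(xᵢ, xᵢ₊₁)` the product does not vanish, so
`0 = 2 P'(t) / P(t) = ∑ⱼ cot ((t - xⱼ) / 2)`. Since `cot` is `π`-periodic, `xⱼ` may be replaced
by the term `x_r` of its class modulo `2N` with `i - 2N < r ≤ i`, and then `(t - x_r) / 2 ∈ (0, π)`,
where `cot` is decreasing. Hence the sum is strictly decreasing in `t` on the gap and does not
decrease when the `xⱼ` move to the right. If `y'ᵢ < x'ᵢ`, then `y'ᵢ` lies in the gap of `x` and
`0 = ∑ cot ((x'ᵢ - xⱼ) / 2) < ∑ cot ((y'ᵢ - xⱼ) / 2) ≤ ∑ cot ((y'ᵢ - yⱼ) / 2) = 0`.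
-/

open Real Set

namespace Real

lemma cot_eq_tan_pi_div_two_sub (θ : ℝ) : cot θ = tan (π / 2 - θ) := by
  rw [tan_pi_div_two_sub, tan_inv_eq_cot]

lemma cot_sub_int_mul_pi (θ : ℝ) (n : ℤ) : cot (θ - n * π) = cot θ := by
  rw [cot_eq_cos_div_sin, cot_eq_cos_div_sin, cos_sub_int_mul_pi, sin_sub_int_mul_pi,
    mul_div_mul_left _ _ (zpow_ne_zero n (by norm_num))]

lemma strictAntiOn_cot : StrictAntiOn cot (Ioo 0 π) := by
  intro a ha b hb hab
  simp only [cot_eq_tan_pi_div_two_sub]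
  exact strictMonoOn_tan ⟨by linarith [hb.2], by linarith [hb.1]⟩
    ⟨by linarith [ha.2], by linarith [ha.1]⟩ (by linarith)

lemma logDeriv_sin_half_sub (c t : ℝ) :
    logDeriv (fun s ↦ sin ((s - c) / 2)) t = cot ((t - c) / 2) / 2 := by
  have hg : HasDerivAt (fun s : ℝ ↦ (s - c) / 2) (1 / 2) t := by
    simpa using ((hasDerivAt_id t).sub_const c).div_const 2
  rw [← Function.comp_def sin, logDeriv_comp differentiableAt_sin hg.differentiableAt,
    logDeriv_sin, hg.deriv]
  ring

end Real

lemma deriv_prod_sin_half_sub_eq_zero_iff {ι : Type*} (s : Finset ι) (c : ι → ℝ) {t : ℝ}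
    (hsin : ∀ j ∈ s, sin ((t - c j) / 2) ≠ 0) :
    deriv (fun t ↦ ∏ j ∈ s, sin ((t - c j) / 2)) t = 0 ↔ ∑ j ∈ s, cot ((t - c j) / 2) = 0 := by
  have hprod : ∏ j ∈ s, sin ((t - c j) / 2) ≠ 0 := Finset.prod_ne_zero_iff.mpr hsin
  have hlog : logDeriv (fun t ↦ ∏ j ∈ s, sin ((t - c j) / 2)) t
      = (∑ j ∈ s, cot ((t - c j) / 2)) / 2 := by
    rw [logDeriv_prod hsin (fun j _ ↦ by fun_prop), Finset.sum_div]
    exact Finset.sum_congr rfl fun j _ ↦ logDeriv_sin_half_sub (c j) t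
  rw [logDeriv_apply, div_eq_iff hprod] at hlog
  simp [hlog, hprod]

section QuasiPeriodic

variable {N : ℕ} {x : ℤ → ℝ}

lemma apply_add_zsmul_of_apply_add (hper : ∀ k : ℤ, x (k + 2 * N) = x k + 2 * π) (k m : ℤ) :
    x (k + m • (2 * N : ℤ)) = x k + m * (2 * π) := by
  induction m using Int.induction_on with
  | zero => simp
  | succ n ih => rw [add_smul, one_smul, ← add_assoc, hper, ih]; push_cast; ring
  | pred n ih =>
    have h := hper (k + (-(n : ℤ) - 1) • (2 * N : ℤ))
    rw [add_assoc, ← add_one_zsmul, sub_add_cancel, ih] at h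
    push_cast at h ⊢
    linarith

lemma cot_half_sub_apply_add_zsmul (hper : ∀ k : ℤ, x (k + 2 * N) = x k + 2 * π)
    (t : ℝ) (k m : ℤ) : cot ((t - x (k + m • (2 * N : ℤ))) / 2) = cot ((t - x k) / 2) := by
  have hshift : (t - (x k + m * (2 * π))) / 2 = (t - x k) / 2 - m * π := by ring
  rw [apply_add_zsmul_of_apply_add hper, hshift, cot_sub_int_mul_pi]

lemma exists_add_zsmul_mem_Ioc (hN : 1 ≤ N) (i k : ℤ) :
    ∃ m : ℤ, k + m • (2 * N : ℤ) ∈ Ioc (i - 2 * N) i := by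
  have h2N : (0 : ℤ) < 2 * N := by positivity
  have h := (existsUnique_add_zsmul_mem_Ioc h2N k (i - 2 * N)).exists
  rwa [sub_add_cancel] at h

lemma half_sub_mem_Ioo (hmono : StrictMono x) (hper : ∀ k : ℤ, x (k + 2 * N) = x k + 2 * π)
    {i r : ℤ} (hr : r ∈ Ioc (i - 2 * N) i) {t : ℝ} (ht : t ∈ Ioo (x i) (x (i + 1))) :
    (t - x r) / 2 ∈ Ioo 0 π := by
  have hle : x r ≤ x i := hmono.monotone hr.2
  have hge : x (i + 1) ≤ x r + 2 * π := hper r ▸ hmono.monotone (by linarith [hr.1])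
  constructor <;> linarith [ht.1, ht.2]

lemma sin_half_sub_ne_zero (hN : 1 ≤ N) (hmono : StrictMono x)
    (hper : ∀ k : ℤ, x (k + 2 * N) = x k + 2 * π) {i : ℤ} {t : ℝ}
    (ht : t ∈ Ioo (x i) (x (i + 1))) (k : ℤ) : sin ((t - x k) / 2) ≠ 0 := by
  obtain ⟨m, hm⟩ := exists_add_zsmul_mem_Ioc hN i k
  have hpos := sin_pos_of_mem_Ioo (half_sub_mem_Ioo hmono hper hm ht)
  rw [apply_add_zsmul_of_apply_add hper] at hpos
  have hshift : (t - (x k + m * (2 * π))) / 2 = (t - x k) / 2 - m * π := by ring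
  rw [hshift, sin_sub_int_mul_pi] at hpos
  exact right_ne_zero_of_mul hpos.ne'

end QuasiPeriodic

/-- `cotSum N x` is twice the logarithmic derivative of `t ↦ ∏_{j < 2N} sin ((t - x j) / 2)`. -/
noncomputable def cotSum (N : ℕ) (x : ℤ → ℝ) (t : ℝ) : ℝ :=
  ∑ j ∈ Finset.range (2 * N), cot ((t - x j) / 2)

section CotSum

variable {N : ℕ} (hN : 1 ≤ N) {x : ℤ → ℝ} (hmono : StrictMono x)
  (hper : ∀ k : ℤ, x (k + 2 * N) = x k + 2 * π)
include hN hmono hper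

lemma cotSum_eq_zero_of_deriv_eq_zero {P : ℝ → ℝ}
    (hP : ∀ t : ℝ, P t = ∏ j ∈ Finset.range (2 * N), sin ((t - x j) / 2))
    {i : ℤ} {t : ℝ} (ht : t ∈ Ioo (x i) (x (i + 1))) (hderiv : deriv P t = 0) :
    cotSum N x t = 0 := by
  rw [funext hP] at hderiv
  exact (deriv_prod_sin_half_sub_eq_zero_iff (Finset.range (2 * N)) (fun j : ℕ ↦ x j)
    fun j _ ↦ sin_half_sub_ne_zero hN hmono hper ht j).mp hderiv

lemma cotSum_strictAntiOn (i : ℤ) : StrictAntiOn (cotSum N x) (Ioo (x i) (x (i + 1))) := by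
  intro s hs t ht hst
  refine Finset.sum_lt_sum_of_nonempty (Finset.nonempty_range_iff.mpr (by omega)) fun j _ ↦ ?_
  obtain ⟨m, hm⟩ := exists_add_zsmul_mem_Ioc hN i j
  rw [← cot_half_sub_apply_add_zsmul hper s j m, ← cot_half_sub_apply_add_zsmul hper t j m]
  exact strictAntiOn_cot (half_sub_mem_Ioo hmono hper hm hs) (half_sub_mem_Ioo hmono hper hm ht)
    (by linarith)

end CotSum

lemma cotSum_le_cotSum {N : ℕ} (hN : 1 ≤ N) {x y : ℤ → ℝ}
    (hxmono : StrictMono x) (hymono : StrictMono y)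
    (hxper : ∀ k : ℤ, x (k + 2 * N) = x k + 2 * π)
    (hyper : ∀ k : ℤ, y (k + 2 * N) = y k + 2 * π)
    (hxy : ∀ k, x k ≤ y k) {i : ℤ} {t : ℝ} (htx : t ∈ Ioo (x i) (x (i + 1)))
    (hty : t ∈ Ioo (y i) (y (i + 1))) : cotSum N x t ≤ cotSum N y t := by
  refine Finset.sum_le_sum fun j _ ↦ ?_
  obtain ⟨m, hm⟩ := exists_add_zsmul_mem_Ioc hN i j
  rw [← cot_half_sub_apply_add_zsmul hxper t j m, ← cot_half_sub_apply_add_zsmul hyper t j m]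
  exact strictAntiOn_cot.antitoneOn (half_sub_mem_Ioo hymono hyper hm hty)
    (half_sub_mem_Ioo hxmono hxper hm htx) (by linarith [hxy (j + m • (2 * N : ℤ))])

theorem periodic_discrete_comparison_principle_general (N : ℕ) (hN : 1 ≤ N)
    (x y : ℤ → ℝ)
    (hxmono : StrictMono x) (hymono : StrictMono y)
    (hxper : ∀ k : ℤ, x (k + 2 * N) = x k + 2 * π)
    (hyper : ∀ k : ℤ, y (k + 2 * N) = y k + 2 * π)
    (P Q : ℝ → ℝ)
    (hP : ∀ t : ℝ, P t = ∏ i ∈ Finset.range (2 * N), Real.sin ((t - x (i : ℤ)) / 2))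
    (hQ : ∀ t : ℝ, Q t = ∏ i ∈ Finset.range (2 * N), Real.sin ((t - y (i : ℤ)) / 2))
    (x' y' : ℤ → ℝ)
    (hx' : ∀ i : ℤ, x' i ∈ Set.Ioo (x i) (x (i + 1)) ∧ deriv P (x' i) = 0 ∧
      ∀ z ∈ Set.Ioo (x i) (x (i + 1)), deriv P z = 0 → z = x' i)
    (hy' : ∀ i : ℤ, y' i ∈ Set.Ioo (y i) (y (i + 1)) ∧ deriv Q (y' i) = 0 ∧
      ∀ z ∈ Set.Ioo (y i) (y (i + 1)), deriv Q z = 0 → z = y' i)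
    (hxy : ∀ i : ℤ, x i ≤ y i) :
    ∀ i : ℤ, x' i ≤ y' i := by
  intro i
  obtain ⟨hxI, hxD, -⟩ := hx' i
  obtain ⟨hyI, hyD, -⟩ := hy' i
  by_contra! hlt
  have hyx : y' i ∈ Ioo (x i) (x (i + 1)) := ⟨(hxy i).trans_lt hyI.1, hlt.trans hxI.2⟩
  have hcontra : cotSum N x (x' i) < cotSum N x (x' i) := calc
    cotSum N x (x' i) < cotSum N x (y' i) := cotSum_strictAntiOn hN hxmono hxper i hyx hxI hlt
    _ ≤ cotSum N y (y' i) := cotSum_le_cotSum hN hxmono hymono hxper hyper hxy hyx hyI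
    _ = 0 := cotSum_eq_zero_of_deriv_eq_zero hN hymono hyper hQ hyI hyD
    _ = cotSum N x (x' i) := (cotSum_eq_zero_of_deriv_eq_zero hN hxmono hxper hP hxI hxD).symm
  exact lt_irrefl _ hcontra

/-- Periodic discrete comparison principle: given two `2N`-periodic (up to `2π`)
strictly increasing families `(xᵢ)_{i∈ℤ}` and `(yᵢ)_{i∈ℤ}` obtained by
periodizing `2N` points of an interval `[a, a + 2π)`, with `xᵢ ≤ yᵢ` for all
`i`, the unique roots `xᵢ'` of `P'` in `(xᵢ, x_{i+1})` and `yᵢ'` of `Q'` in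
`(yᵢ, y_{i+1})`, where `P(t) = ∏_{i=0}^{2N-1} sin((t - xᵢ)/2)` and
`Q(t) = ∏_{i=0}^{2N-1} sin((t - yᵢ)/2)`, satisfy `xᵢ' ≤ yᵢ'` for all `i ∈ ℤ`. -/
theorem periodic_discrete_comparison_principle (N : ℕ) (hN : 1 ≤ N) (a : ℝ)
    (x y : ℤ → ℝ)
    (hxmono : StrictMono x) (hymono : StrictMono y)
    (hxper : ∀ k : ℤ, x (k + 2 * N) = x k + 2 * π)
    (hyper : ∀ k : ℤ, y (k + 2 * N) = y k + 2 * π)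
    (hx0 : a ≤ x 0) (hxlt : x (2 * (N : ℤ) - 1) < a + 2 * π)
    (hy0 : a ≤ y 0) (hylt : y (2 * (N : ℤ) - 1) < a + 2 * π)
    (P Q : ℝ → ℝ)
    (hP : ∀ t : ℝ, P t = ∏ i ∈ Finset.range (2 * N), Real.sin ((t - x (i : ℤ)) / 2))
    (hQ : ∀ t : ℝ, Q t = ∏ i ∈ Finset.range (2 * N), Real.sin ((t - y (i : ℤ)) / 2))
    (x' y' : ℤ → ℝ)
    (hx' : ∀ i : ℤ, x' i ∈ Set.Ioo (x i) (x (i + 1)) ∧ deriv P (x' i) = 0 ∧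
      ∀ z ∈ Set.Ioo (x i) (x (i + 1)), deriv P z = 0 → z = x' i)
    (hy' : ∀ i : ℤ, y' i ∈ Set.Ioo (y i) (y (i + 1)) ∧ deriv Q (y' i) = 0 ∧
      ∀ z ∈ Set.Ioo (y i) (y (i + 1)), deriv Q z = 0 → z = y' i)
    (hxy : ∀ i : ℤ, x i ≤ y i) :
    ∀ i : ℤ, x' i ≤ y' i :=
  periodic_discrete_comparison_principle_general N hN x y hxmono hymono hxper hyper P Q hP hQ x' y'
    hx' hy' hxy
end

section
/- Let N ≥ 1 be an integer, δ > 0, θ₀ ∈ ℝ, I_δ = (θ₀ − δ, θ₀ + δ), and let φ : ℝ → ℝ be twice continuously differentiable with K_δ := inf_{x ∈ I_δ} φ'(x) > 0 and M := sup_{x ∈ I_δ} |φ''(x)| < ∞. Let E = { i ∈ ℤ : i/(2N) ∈ φ(I_δ) }, for i ∈ E let μ^i ∈ I_δ be the unique point with φ(μ^i) = i/(2N), fix i₀ ∈ E, and for j ∈ E set μ̃^j := μ^{i₀} + (j − i₀)/(2N·φ'(μ^{i₀})). Then for all j ∈ E: (i) |μ^j − μ̃^j| ≤ (M/K_δ³)·|i₀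 − j|²/(8N²); (ii) if j+1 ∈ E then |μ^{j+1} − μ^j − 1/(2N·φ'(μ^j))| ≤ (M/K_δ³)/(8N²); (iii) |μ^j − μ̃^j| ≤ (M/K_δ³)·|j − i₀|/(8N²) + (M/K_δ³)·|i₀ − j|²/(8N²). -/
/-!
Write `Δ = φ(μᵏ) - φ(μⁱ) = (k - i)/(2N)`. Taylor's formula with Lagrange remainder gives
`|Δ - φ'(μⁱ)(μᵏ - μⁱ)| ≤ (M/2)(μᵏ - μⁱ)²`, and `φ' ≥ K_δ` gives `|μᵏ - μⁱ| ≤ |Δ|/K_δ`.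
Dividing by `φ'(μⁱ) ≥ K_δ` yields `|μᵏ - μⁱ - Δ/φ'(μⁱ)| ≤ (M/(2K_δ³))Δ²`: this is (i) for
`(i, k) = (i₀, j)` and (ii) for `(i, k) = (j, j + 1)`, while (iii) is weaker than (i).
-/

open Set

theorem abs_sub_sub_deriv_mul_le {f : ℝ → ℝ} (hf : ContDiff ℝ 2 f) {s : Set ℝ} (hs : Convex ℝ s)
    {M : ℝ} (hM : ∀ x ∈ s, |deriv (deriv f) x| ≤ M) {a b : ℝ} (ha : a ∈ s) (hb : b ∈ s) :
    |f b - f a - deriv f a * (b - a)| ≤ M / 2 * (b - a) ^ 2 := by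
  rcases eq_or_ne a b with rfl | hab
  · simp
  obtain ⟨c, hc, hTaylor⟩ := taylor_mean_remainder_lagrange_iteratedDeriv (n := 1) hab hf.contDiffOn
  have hlinear : taylorWithinEval f 1 (uIcc a b) a b = f a + deriv f a * (b - a) := by
    rw [taylorWithinEval_succ, taylor_within_zero_eval, iteratedDerivWithin_one,
      (hf.differentiable two_ne_zero a).derivWithin (uniqueDiffOn_uIcc hab a left_mem_uIcc)]
    simp [mul_comm]
  have hcs : c ∈ s := hs.ordConnected.uIcc_subset ha hb (Ioo_subset_Icc_self hc)
  rw [sub_sub, ← hlinear, hTaylor, iteratedDeriv_succ, iteratedDeriv_one, abs_div, abs_mul,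
    abs_of_nonneg (sq_nonneg (b - a))]
  norm_num [Nat.factorial]
  nlinarith [hM c hcs, sq_nonneg (b - a)]

theorem mul_abs_sub_le_abs_sub_of_le_deriv {f : ℝ → ℝ} (hf : Differentiable ℝ f) {s : Set ℝ}
    (hs : Convex ℝ s) {K : ℝ} (hK : 0 ≤ K) (hKle : ∀ x ∈ s, K ≤ deriv f x) {a b : ℝ}
    (ha : a ∈ s) (hb : b ∈ s) : K * |b - a| ≤ |f b - f a| := by
  wlog hab : a ≤ b generalizing a b
  · rw [abs_sub_comm, abs_sub_comm (f b)]
    exact this hb ha (le_of_not_ge hab)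
  have hincr := hs.mul_sub_le_image_sub_of_le_deriv hf.continuous.continuousOn
    hf.differentiableOn (fun x hx => hKle x (interior_subset hx)) a ha b hb hab
  rw [abs_of_nonneg (sub_nonneg.2 hab), abs_of_nonneg (hincr.trans' (by positivity))]
  exact hincr

theorem abs_sub_sub_div_deriv_le {f : ℝ → ℝ} (hf : ContDiff ℝ 2 f) {s : Set ℝ} (hs : Convex ℝ s)
    {K M : ℝ} (hK : 0 < K) (hKle : ∀ x ∈ s, K ≤ deriv f x)
    (hM : ∀ x ∈ s, |deriv (deriv f) x| ≤ M) {a b : ℝ} (ha : a ∈ s) (hb : b ∈ s) :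
    |b - a - (f b - f a) / deriv f a| ≤ M / K ^ 3 * (f b - f a) ^ 2 / 2 := by
  have hfa : K ≤ deriv f a := hKle a ha
  have hsq : K ^ 2 * (b - a) ^ 2 ≤ (f b - f a) ^ 2 := by
    rw [← sq_abs (b - a), ← sq_abs (f b - f a), ← mul_pow]
    exact pow_le_pow_left₀ (by positivity)
      (mul_abs_sub_le_abs_sub_of_le_deriv (hf.differentiable two_ne_zero) hs hK.le hKle ha hb) 2
  have hrewrite : b - a - (f b - f a) / deriv f a
      = -((f b - f a - deriv f a * (b - a)) / deriv f a) := by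
    field_simp [(hK.trans_le hfa).ne']
    ring
  rw [hrewrite, abs_neg, abs_div, abs_of_pos (hK.trans_le hfa)]
  have htaylor := abs_sub_sub_deriv_mul_le hf hs hM ha hb
  have hM0 : 0 ≤ M := (abs_nonneg _).trans (hM a ha)
  calc |f b - f a - deriv f a * (b - a)| / deriv f a
      ≤ M / 2 * (b - a) ^ 2 / K := div_le_div₀ ((abs_nonneg _).trans htaylor) htaylor hK hfa
    _ ≤ M / 2 * ((f b - f a) ^ 2 / K ^ 2) / K := by
        gcongr
        rwa [le_div_iff₀' (by positivity)]
    _ = M / K ^ 3 * (f b - f a) ^ 2 / 2 := by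
        field_simp

theorem abs_sub_sub_grid_div_deriv_le {f : ℝ → ℝ} (hf : ContDiff ℝ 2 f) {s : Set ℝ}
    (hs : Convex ℝ s) {K M : ℝ} (hK : 0 < K) (hKle : ∀ x ∈ s, K ≤ deriv f x)
    (hM : ∀ x ∈ s, |deriv (deriv f) x| ≤ M) (N : ℝ) {a b i k : ℝ} (ha : a ∈ s) (hb : b ∈ s)
    (hfa : f a = i / (2 * N)) (hfb : f b = k / (2 * N)) :
    |b - a - (k - i) / (2 * N * deriv f a)| ≤ M / K ^ 3 * |k - i| ^ 2 / (8 * N ^ 2) := by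
  have h := abs_sub_sub_div_deriv_le hf hs hK hKle hM ha hb
  rw [hfa, hfb] at h
  rw [sq_abs]
  convert h using 1 <;> ring_nf

theorem grid_preimage_linearization_general (N : ℕ) (δ θ₀ : ℝ)
    (φ : ℝ → ℝ) (hφ : ContDiff ℝ 2 φ)
    (Kδ : ℝ) (hKδ : Kδ = sInf (deriv φ '' Set.Ioo (θ₀ - δ) (θ₀ + δ)))
    (hKpos : 0 < Kδ)
    (M : ℝ)
    (hM : M = sSup ((fun x => |deriv (deriv φ) x|) '' Set.Ioo (θ₀ - δ) (θ₀ + δ)))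
    (hMbdd : BddAbove ((fun x => |deriv (deriv φ) x|) '' Set.Ioo (θ₀ - δ) (θ₀ + δ)))
    (μ : ℤ → ℝ)
    (hμ : ∀ i : ℤ, (i : ℝ) / (2 * N) ∈ φ '' Set.Ioo (θ₀ - δ) (θ₀ + δ) →
      μ i ∈ Set.Ioo (θ₀ - δ) (θ₀ + δ) ∧ φ (μ i) = (i : ℝ) / (2 * N))
    (i₀ : ℤ) (hi₀ : (i₀ : ℝ) / (2 * N) ∈ φ '' Set.Ioo (θ₀ - δ) (θ₀ + δ))
    (μt : ℤ → ℝ)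
    (hμt : ∀ j : ℤ, μt j = μ i₀ + ((j : ℝ) - (i₀ : ℝ)) / (2 * N * deriv φ (μ i₀)))
    (j : ℤ) (hj : (j : ℝ) / (2 * N) ∈ φ '' Set.Ioo (θ₀ - δ) (θ₀ + δ)) :
    |μ j - μt j| ≤ (M / Kδ ^ 3) * |(i₀ : ℝ) - (j : ℝ)| ^ 2 / (8 * N ^ 2) ∧
      (((j : ℝ) + 1) / (2 * N) ∈ φ '' Set.Ioo (θ₀ - δ) (θ₀ + δ) →
        |μ (j + 1) - μ j - 1 / (2 * N * deriv φ (μ j))| ≤ (M / Kδ ^ 3) / (8 * N ^ 2)) ∧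
      |μ j - μt j| ≤ (M / Kδ ^ 3) * |(j : ℝ) - (i₀ : ℝ)| / (8 * N ^ 2) +
        (M / Kδ ^ 3) * |(i₀ : ℝ) - (j : ℝ)| ^ 2 / (8 * N ^ 2) := by
  set I := Set.Ioo (θ₀ - δ) (θ₀ + δ)
  -- `sInf` of a set of reals that is not bounded below is `0`, so `0 < Kδ` forces boundedness.
  have hKle : ∀ x ∈ I, Kδ ≤ deriv φ x := fun x hx =>
    hKδ ▸ csInf_le (by_contra fun h => hKpos.ne' (hKδ.trans (Real.sInf_of_not_bddBelow h)))
      ⟨x, hx, rfl⟩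
  have hMle : ∀ x ∈ I, |deriv (deriv φ) x| ≤ M := fun x hx => hM ▸ le_csSup hMbdd ⟨x, hx, rfl⟩
  have hstep : ∀ i k : ℤ, (i : ℝ) / (2 * N) ∈ φ '' I → (k : ℝ) / (2 * N) ∈ φ '' I →
      |μ k - μ i - ((k : ℝ) - i) / (2 * N * deriv φ (μ i))| ≤
        M / Kδ ^ 3 * |(k : ℝ) - i| ^ 2 / (8 * N ^ 2) := fun i k hi hk =>
    abs_sub_sub_grid_div_deriv_le hφ (convex_Ioo _ _) hKpos hKle hMle N (hμ i hi).1 (hμ k hk).1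
      (hμ i hi).2 (hμ k hk).2
  have hlin : |μ j - μt j| ≤ (M / Kδ ^ 3) * |(i₀ : ℝ) - (j : ℝ)| ^ 2 / (8 * N ^ 2) := by
    rw [hμt, sub_add_eq_sub_sub, abs_sub_comm (i₀ : ℝ)]
    exact hstep i₀ j hi₀ hj
  have hM0 : 0 ≤ M := (abs_nonneg _).trans (hMle _ (hμ j hj).1)
  refine ⟨hlin, fun hj₁ => ?_, le_add_of_nonneg_of_le (by positivity) hlin⟩
  have h := hstep j (j + 1) hj (by exact_mod_cast hj₁)
  push_cast at h
  simpa using h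

/-- Linearization estimates for the preimages of grid points: with `φ` of class
`C²`, `K_δ := inf_{I_δ} φ' > 0` and `M := sup_{I_δ} |φ''| < ∞` on
`I_δ = (θ₀-δ, θ₀+δ)`, `μ^i = φ⁻¹(i/(2N)) ∈ I_δ`, and
`μ̃^j := μ^{i₀} + (j - i₀)/(2N φ'(μ^{i₀}))`, one has, for all admissible `j`:
(i) `|μ^j - μ̃^j| ≤ (M/K_δ³)·|i₀-j|²/(8N²)`;
(ii) if `j+1` is admissible, `|μ^{j+1} - μ^j - 1/(2N φ'(μ^j))| ≤ (M/K_δ³)/(8N²)`;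
(iii) `|μ^j - μ̃^j| ≤ (M/K_δ³)·|j-i₀|/(8N²) + (M/K_δ³)·|i₀-j|²/(8N²)`. -/
theorem grid_preimage_linearization (N : ℕ) (hN : 1 ≤ N) (δ θ₀ : ℝ) (hδ : 0 < δ)
    (φ : ℝ → ℝ) (hφ : ContDiff ℝ 2 φ)
    (Kδ : ℝ) (hKδ : Kδ = sInf (deriv φ '' Set.Ioo (θ₀ - δ) (θ₀ + δ)))
    (hKpos : 0 < Kδ)
    (M : ℝ)
    (hM : M = sSup ((fun x => |deriv (deriv φ) x|) '' Set.Ioo (θ₀ - δ) (θ₀ + δ)))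
    (hMbdd : BddAbove ((fun x => |deriv (deriv φ) x|) '' Set.Ioo (θ₀ - δ) (θ₀ + δ)))
    (μ : ℤ → ℝ)
    (hμ : ∀ i : ℤ, (i : ℝ) / (2 * N) ∈ φ '' Set.Ioo (θ₀ - δ) (θ₀ + δ) →
      μ i ∈ Set.Ioo (θ₀ - δ) (θ₀ + δ) ∧ φ (μ i) = (i : ℝ) / (2 * N))
    (i₀ : ℤ) (hi₀ : (i₀ : ℝ) / (2 * N) ∈ φ '' Set.Ioo (θ₀ - δ) (θ₀ + δ))
    (μt : ℤ → ℝ)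
    (hμt : ∀ j : ℤ, μt j = μ i₀ + ((j : ℝ) - (i₀ : ℝ)) / (2 * N * deriv φ (μ i₀)))
    (j : ℤ) (hj : (j : ℝ) / (2 * N) ∈ φ '' Set.Ioo (θ₀ - δ) (θ₀ + δ)) :
    |μ j - μt j| ≤ (M / Kδ ^ 3) * |(i₀ : ℝ) - (j : ℝ)| ^ 2 / (8 * N ^ 2) ∧
      (((j : ℝ) + 1) / (2 * N) ∈ φ '' Set.Ioo (θ₀ - δ) (θ₀ + δ) →
        |μ (j + 1) - μ j - 1 / (2 * N * deriv φ (μ j))| ≤ (M / Kδ ^ 3) / (8 * N ^ 2)) ∧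
      |μ j - μt j| ≤ (M / Kδ ^ 3) * |(j : ℝ) - (i₀ : ℝ)| / (8 * N ^ 2) +
        (M / Kδ ^ 3) * |(i₀ : ℝ) - (j : ℝ)| ^ 2 / (8 * N ^ 2) :=
  grid_preimage_linearization_general N δ θ₀ φ hφ Kδ hKδ hKpos M hM hMbdd μ hμ i₀ hi₀ μt hμt j hj
end
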